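/- arXiv:1905.07696 — 3 statements merged into one kernel-verified Lean document; each statement's English description precedes it below -/
import Mathlib

section
/- The inference rule IFCP2_P — from the premise Ps(p ∨ q) ∧ Pw r together with the theorem premise ⊢ r → p, infer Ps p — is valid in the class of IFCP2_P-permitted deontic neighbourhood frames. -/
namespace Deontic

/-- Formulas of the deontic modal language: atoms, falsum, implication,
obligation `O` and strong permission `Ps`. The other Boolean connectives and
weak permission `Pw := ¬O¬` are defined. -/
inductive Form : Type where
  | atom : Nat → Form
  | fls  : Form
  | imp  : Form → Form → Form
  | obl  : Form → Form
  | ps   : Form → Form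

namespace Form
def neg (p : Form) : Form := imp p fls
def or (p q : Form) : Form := imp (neg p) q
def and (p q : Form) : Form := neg (imp p (neg q))
def iff (p q : Form) : Form := and (imp p q) (imp q p)
/-- Weak permission `Pw p := ¬ O ¬ p`. -/
def pw (p : Form) : Form := neg (obl (neg p))
end Form

/-- A deontic neighbourhood frame: a non-empty set of worlds together with
neighbourhood functions for obligation and strong permission. -/
structure Frame : Type 1 where
  W : Type
  ne : Nonempty W
  NO : W → Set (Set W)
  NP : W → Set (Set W)

/-- Truth of a formula at a world of a model (a frame plus valuation `V`). -/
def Truth (F : Frame) (V : Nat → Set F.W) : F.W → Form → Prop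
  | w, .atom n => w ∈ V n
  | _, .fls => False
  | w, .imp p q => Truth F V w p → Truth F V w q
  | w, .obl p => {v | Truth F V v p} ∈ F.NO w
  | w, .ps p => {v | Truth F V v p} ∈ F.NP w

/-- Validity in a frame: truth at every world of every model based on it. -/
def Valid (F : Frame) (p : Form) : Prop := ∀ (V : Nat → Set F.W) (w : F.W), Truth F V w p

/- Frame properties. -/
def PsCoherent (F : Frame) : Prop :=
  ∀ (w : F.W) (X : Set F.W), X ∈ F.NP w → Xᶜ ∉ F.NO w
def PwCoherent (F : Frame) : Prop :=
  ∀ (w : F.W) (X : Set F.W), X ∈ F.NO w → Xᶜ ∉ F.NO w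
def AFCPOPermitted (F : Frame) : Prop :=
  ∀ (w : F.W) (X Y : Set F.W), X ∪ Y ∈ F.NP w → Yᶜ ∈ F.NO w → X ∈ F.NP w
def AFCPPPermitted (F : Frame) : Prop :=
  ∀ (w : F.W) (X Y : Set F.W), X ∪ Y ∈ F.NP w → Xᶜ ∉ F.NO w → Yᶜ ∉ F.NO w →
    X ∈ F.NP w ∧ Y ∈ F.NP w
def AFCP2PPermitted (F : Frame) : Prop :=
  ∀ (w : F.W) (X Y : Set F.W), X ∪ Y ∈ F.NP w → Xᶜ ∉ F.NO w → X ∈ F.NP w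
def IFCPOPermitted (F : Frame) : Prop :=
  ∀ (w : F.W) (X Y Z : Set F.W), X ∪ Y ∈ F.NP w → Z ⊆ Yᶜ → Zᶜ ∈ F.NO w → X ∈ F.NP w
def IFCPPPermitted (F : Frame) : Prop :=
  ∀ (w : F.W) (X Y Z Q : Set F.W), X ∪ Y ∈ F.NP w → Z ⊆ X → Q ⊆ Y →
    Zᶜ ∉ F.NO w → Qᶜ ∉ F.NO w → X ∈ F.NP w ∧ Y ∈ F.NP w
def IFCP2PPermitted (F : Frame) : Prop :=
  ∀ (w : F.W) (X Y Z : Set F.W), X ∪ Y ∈ F.NP w → Z ⊆ X → Zᶜ ∉ F.NO w → X ∈ F.NP w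
def SuppO (F : Frame) : Prop :=
  ∀ (w : F.W) (X Y : Set F.W), X ∩ Y ∈ F.NO w → X ∈ F.NO w ∧ Y ∈ F.NO w
def SuppP (F : Frame) : Prop :=
  ∀ (w : F.W) (X Y : Set F.W), X ∩ Y ∈ F.NP w → X ∈ F.NP w ∧ Y ∈ F.NP w

/-- Flags selecting the extra axiom schemata and inference rules of a system. -/
structure Flags where
  ds : Bool := false
  dw : Bool := false
  afcpo : Bool := false
  afcpp : Bool := false
  afcp2p : Bool := false
  m : Bool := false
  ifcpo : Bool := false
  ifcpp : Bool := false
  ifcp2p : Bool := false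

/-- Hilbert-style provability.  The base system `E` consists of classical
propositional logic (a complete axiomatisation over `→`/`⊥` plus modus ponens)
together with the congruence rule RE for both `O` and `Ps`.  The flags switch
on the further axiom schemata/rules. -/
inductive Prv (S : Flags) : Form → Prop where
  | ax1 (p q : Form) : Prv S (p.imp (q.imp p))
  | ax2 (p q r : Form) :
      Prv S ((p.imp (q.imp r)).imp ((p.imp q).imp (p.imp r)))
  | ax3 (p : Form) : Prv S ((p.neg.neg).imp p)
  | mp {p q : Form} : Prv S (p.imp q) → Prv S p → Prv S q
  | reO {p q : Form} : Prv S (p.iff q) → Prv S ((Form.obl p).iff (Form.obl q))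
  | reP {p q : Form} : Prv S (p.iff q) → Prv S ((Form.ps p).iff (Form.ps q))
  | ds (p : Form) : S.ds = true →
      Prv S (((Form.obl p).and (Form.ps p.neg)).imp Form.fls)
  | dw (p : Form) : S.dw = true →
      Prv S (((Form.obl p).and (Form.obl p.neg)).imp Form.fls)
  | afcpo (p q : Form) : S.afcpo = true →
      Prv S (((Form.ps (p.or q)).and (Form.obl p.neg)).imp (Form.ps q))
  | afcpp (p q : Form) : S.afcpp = true →
      Prv S (((Form.ps (p.or q)).and ((p.pw).and q.pw)).imp
        ((Form.ps p).and (Form.ps q)))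
  | afcp2p (p q : Form) : S.afcp2p = true →
      Prv S (((Form.ps (p.or q)).and p.pw).imp (Form.ps p))
  | mO (p q : Form) : S.m = true →
      Prv S ((Form.obl (p.and q)).imp ((Form.obl p).and (Form.obl q)))
  | mP (p q : Form) : S.m = true →
      Prv S ((Form.ps (p.and q)).imp ((Form.ps p).and (Form.ps q)))
  | ifcpo {p q r : Form} : S.ifcpo = true →
      Prv S ((Form.ps (p.or q)).and (Form.obl r)) →
      Prv S (r.imp p.neg) → Prv S (Form.ps q)
  | ifcpp {p q r s : Form} : S.ifcpp = true →
      Prv S ((Form.ps (p.or q)).and ((r.pw).and s.pw)) →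
      Prv S (r.imp p) → Prv S (s.imp q) →
      Prv S ((Form.ps p).and (Form.ps q))
  | ifcp2p {p q r : Form} : S.ifcp2p = true →
      Prv S ((Form.ps (p.or q)).and r.pw) →
      Prv S (r.imp p) → Prv S (Form.ps p)

def SysE : Flags := {}
def SysMin : Flags := { ds := true, dw := true }
def SysFCP1 : Flags := { ds := true, dw := true, ifcpo := true, ifcpp := true }
def SysFCP2 : Flags := { ds := true, dw := true, afcpo := true, afcpp := true }
def SysFCP3 : Flags := { ds := true, dw := true, afcpo := true, afcpp := true, m := true }
def SysFCP4 : Flags := { ds := true, dw := true, afcpo := true, afcp2p := true }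
def SysFCP5 : Flags := { ds := true, dw := true, ifcpo := true, ifcp2p := true }
def SysFCP6 : Flags := { ds := true, dw := true, afcpo := true, afcp2p := true, m := true }

/-- The inference rule `IFCP2_P` — from the premise `Ps(p ∨ q) ∧ Pw r` and the
theorem premise `⊢ r → p`, infer `Ps p` — is valid in the class of
`IFCP2_P`-permitted deontic neighbourhood frames. -/
theorem IFCP2P_rule_valid_in_IFCP2PPermitted :
    ∀ F : Frame, IFCP2PPermitted F →
      ∀ p q r : Form,
        Valid F ((Form.ps (p.or q)).and r.pw) →
        Valid F (r.imp p) →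
        Valid F (Form.ps p) := by
  intro F hF p q r hprem hrp V w
  have h := hprem V w
  simp only [Form.and, Form.neg, Form.pw, Form.or, Truth] at h ⊢
  by_contra hnp
  apply h
  intro hps hpw
  have hXY : {v | Truth F V v p} ∪ {v | Truth F V v q} ∈ F.NP w := by
    have : {v | Truth F V v p} ∪ {v | Truth F V v q} =
        {v | (Truth F V v p → False) → Truth F V v q} := by
      ext v; constructor
      · rintro (h1 | h1) h2
        · exact absurd h1 h2
        · exact h1
      · intro h1
        by_cases hp : Truth F V v p
        · exact Or.inl hp
        · exact Or.inr (h1 hp)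
    rw [this]; exact hps
  have hZ : {v | Truth F V v r} ⊆ {v | Truth F V v p} := fun v hv => hrp V v hv
  have hZc : {v | Truth F V v r}ᶜ ∉ F.NO w := by
    intro hc
    apply hpw
    have : {v | Truth F V v r → False} = {v | Truth F V v r}ᶜ := rfl
    rw [this]; exact hc
  exact hnp (hF w _ _ _ hXY hZ hZc)

end Deontic
end

section
/- The Hilbert system Min, obtained from E by adding the axiom schemata D_s: (O p ∧ Ps ¬p) → ⊥ and D_w: (O p ∧ O ¬p) → ⊥, is sound and complete with respect to the class of deontic neighbourhood frames that are both Ps-coherent and Pw-coherent: a formula is a theorem of Min iff it is valid in every such frame. -/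
namespace Deontic

/-!
Soundness is a routine induction on derivations: `RE` holds in every neighbourhood frame
because equivalent formulas have equal truth sets, and since `‖¬p‖ = W ∖ ‖p‖`, the axioms
`D_s` and `D_w` are exactly the two coherence conditions.

Completeness uses the canonical neighbourhood model: worlds are the maximal consistent sets,
and `N_O(Γ)` (resp. `N_P(Γ)`) consists of the truth sets `‖p‖` with `O p ∈ Γ` (resp.
`Ps p ∈ Γ`). Two formulas with the same truth set are provably equivalent, so by `RE` the
membership of `O p` in `Γ` depends only on `‖p‖`; this gives the truth lemma, and `D_s`, `D_w`
give coherence of the canonical frame.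
-/

theorem Prv.imp_self (S : Flags) (p : Form) : Prv S (p.imp p) :=
  ((Prv.ax2 p (p.imp p) p).mp (Prv.ax1 p (p.imp p))).mp (Prv.ax1 p p)

inductive PrvFrom (S : Flags) (Γ : Set Form) : Form → Prop where
  | hyp {p : Form} : p ∈ Γ → PrvFrom S Γ p
  | thm {p : Form} : Prv S p → PrvFrom S Γ p
  | mp {p q : Form} : PrvFrom S Γ (p.imp q) → PrvFrom S Γ p → PrvFrom S Γ q

namespace PrvFrom

variable {S : Flags} {Γ Δ : Set Form} {p q : Form}

theorem mono (h : PrvFrom S Γ p) (hΓΔ : Γ ⊆ Δ) : PrvFrom S Δ p := by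
  induction h with
  | hyp h => exact .hyp (hΓΔ h)
  | thm h => exact .thm h
  | mp _ _ ihpq ihp => exact .mp ihpq ihp

theorem imp_of_insert (h : PrvFrom S (insert p Γ) q) : PrvFrom S Γ (p.imp q) := by
  induction h with
  | @hyp r hr =>
    rcases hr with rfl | hr
    · exact .thm (Prv.imp_self S _)
    · exact .mp (.thm (Prv.ax1 r p)) (.hyp hr)
  | @thm r hr => exact .mp (.thm (Prv.ax1 r p)) (.thm hr)
  | @mp r s _ _ ihrs ihr => exact .mp (.mp (.thm (Prv.ax2 p r s)) ihrs) ihr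

theorem prv_of_empty (h : PrvFrom S ∅ p) : Prv S p := by
  induction h with
  | hyp h => exact absurd h (Set.notMem_empty _)
  | thm h => exact h
  | mp _ _ ihpq ihp => exact ihpq.mp ihp

theorem of_fls (h : PrvFrom S Γ .fls) : PrvFrom S Γ p :=
  .mp (.thm (Prv.ax3 p)) (.mp (.thm (Prv.ax1 .fls p.neg)) h)

theorem exists_mem_of_sUnion {c : Set (Set Form)} (hc : IsChain (· ⊆ ·) c) (hne : c.Nonempty)
    (h : PrvFrom S (⋃₀ c) p) : ∃ Γ ∈ c, PrvFrom S Γ p := by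
  induction h with
  | hyp h =>
    obtain ⟨Γ, hΓ, hp⟩ := h
    exact ⟨Γ, hΓ, .hyp hp⟩
  | thm h => exact ⟨hne.some, hne.some_mem, .thm h⟩
  | mp _ _ ihpq ihp =>
    obtain ⟨Γ, hΓ, hpq⟩ := ihpq
    obtain ⟨Γ', hΓ', hp⟩ := ihp
    rcases hc.total hΓ hΓ' with hsub | hsub
    · exact ⟨Γ', hΓ', .mp (hpq.mono hsub) hp⟩
    · exact ⟨Γ, hΓ, .mp hpq (hp.mono hsub)⟩

end PrvFrom

def Consistent (S : Flags) (Γ : Set Form) : Prop := ¬ PrvFrom S Γ .fls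

def MaximalConsistent (S : Flags) (Γ : Set Form) : Prop := Maximal (Consistent S) Γ

section

variable {S : Flags} {Γ : Set Form} {p q : Form}

theorem exists_maximalConsistent_superset (h : Consistent S Γ) :
    ∃ Δ, Γ ⊆ Δ ∧ MaximalConsistent S Δ := by
  refine zorn_subset_nonempty {Δ | Consistent S Δ} (fun c hcons hc hne => ?_) Γ h
  refine ⟨⋃₀ c, fun hfls => ?_, fun _ => Set.subset_sUnion_of_mem⟩
  obtain ⟨_, hΔ, hΔfls⟩ := PrvFrom.exists_mem_of_sUnion hc hne hfls
  exact hcons hΔ hΔfls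

namespace MaximalConsistent

theorem insert_inconsistent (hΓ : MaximalConsistent S Γ) (hp : p ∉ Γ) :
    PrvFrom S (insert p Γ) .fls := by
  by_contra hcons
  exact hp (hΓ.2 hcons (Set.subset_insert p Γ) (Set.mem_insert p Γ))

theorem mem_of_prvFrom (hΓ : MaximalConsistent S Γ) (h : PrvFrom S Γ p) : p ∈ Γ := by
  by_contra hp
  exact hΓ.1 (.mp (hΓ.insert_inconsistent hp).imp_of_insert h)

theorem mem_of_prv (hΓ : MaximalConsistent S Γ) (h : Prv S p) : p ∈ Γ :=
  hΓ.mem_of_prvFrom (.thm h)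

theorem fls_notMem (hΓ : MaximalConsistent S Γ) : Form.fls ∉ Γ :=
  fun h => hΓ.1 (.hyp h)

theorem imp_mem (hΓ : MaximalConsistent S Γ) : p.imp q ∈ Γ ↔ (p ∈ Γ → q ∈ Γ) := by
  refine ⟨fun hpq hp => hΓ.mem_of_prvFrom (.mp (.hyp hpq) (.hyp hp)), fun hpq => ?_⟩
  by_cases hp : p ∈ Γ
  · exact hΓ.mem_of_prvFrom (.mp (.thm (Prv.ax1 q p)) (.hyp (hpq hp)))
  · exact hΓ.mem_of_prvFrom (hΓ.insert_inconsistent hp).of_fls.imp_of_insert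

theorem neg_mem (hΓ : MaximalConsistent S Γ) : p.neg ∈ Γ ↔ p ∉ Γ :=
  hΓ.imp_mem.trans (imp_congr_right fun _ => iff_false_intro hΓ.fls_notMem)

theorem and_mem (hΓ : MaximalConsistent S Γ) : p.and q ∈ Γ ↔ p ∈ Γ ∧ q ∈ Γ := by
  rw [Form.and, hΓ.neg_mem, hΓ.imp_mem, hΓ.neg_mem]
  tauto

theorem iff_mem (hΓ : MaximalConsistent S Γ) : p.iff q ∈ Γ ↔ (p ∈ Γ ↔ q ∈ Γ) := by
  rw [Form.iff, hΓ.and_mem, hΓ.imp_mem, hΓ.imp_mem, ← iff_iff_implies_and_implies]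

theorem mem_congr (hΓ : MaximalConsistent S Γ) (h : Prv S (p.iff q)) : p ∈ Γ ↔ q ∈ Γ :=
  hΓ.iff_mem.1 (hΓ.mem_of_prv h)

theorem not_and_of_prv_neg_and (hΓ : MaximalConsistent S Γ) (h : Prv S (p.and q).neg) :
    ¬ (p ∈ Γ ∧ q ∈ Γ) :=
  fun hpq => hΓ.neg_mem.1 (hΓ.mem_of_prv h) (hΓ.and_mem.2 hpq)

end MaximalConsistent

theorem exists_maximalConsistent_notMem (h : ¬ Prv S p) :
    ∃ Γ, MaximalConsistent S Γ ∧ p ∉ Γ := by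
  have hcons : Consistent S (insert p.neg ∅) := fun hfls =>
    h (PrvFrom.prv_of_empty (.mp (.thm (Prv.ax3 p)) hfls.imp_of_insert))
  obtain ⟨Γ, hsub, hΓ⟩ := exists_maximalConsistent_superset hcons
  exact ⟨Γ, hΓ, hΓ.neg_mem.1 (hsub (Set.mem_insert _ _))⟩

theorem prv_iff_forall_maximalConsistent :
    Prv S p ↔ ∀ Γ, MaximalConsistent S Γ → p ∈ Γ := by
  refine ⟨fun h Γ hΓ => hΓ.mem_of_prv h, fun h => ?_⟩
  by_contra hp
  obtain ⟨Γ, hΓ, hpΓ⟩ := exists_maximalConsistent_notMem hp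
  exact hpΓ (h Γ hΓ)

end

section Soundness

variable {F : Frame} {V : Nat → Set F.W} {w : F.W} {p q : Form}

theorem truth_and : Truth F V w (p.and q) ↔ Truth F V w p ∧ Truth F V w q := by
  simp only [Form.and, Form.neg, Truth]
  tauto

theorem truth_iff : Truth F V w (p.iff q) ↔ (Truth F V w p ↔ Truth F V w q) := by
  simp only [Form.iff, truth_and, Truth]
  exact iff_iff_implies_and_implies.symm

theorem setOf_truth_neg : {v | Truth F V v p.neg} = {v | Truth F V v p}ᶜ := rfl

theorem setOf_truth_eq_of_valid_iff (h : Valid F (p.iff q)) (V : Nat → Set F.W) :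
    {v | Truth F V v p} = {v | Truth F V v q} :=
  Set.ext fun v => truth_iff.1 (h V v)

theorem valid_of_prv_sysMin (hPs : PsCoherent F) (hPw : PwCoherent F) (h : Prv SysMin p) :
    Valid F p := by
  induction h with
  | ax1 => exact fun _ _ hp _ => hp
  | ax2 => exact fun _ _ hpqr hpq hp => hpqr hp (hpq hp)
  | ax3 => exact fun _ _ hnnp => Classical.not_not.1 hnnp
  | mp _ _ ihpq ihp => exact fun V w => ihpq V w (ihp V w)
  | reO _ ih =>
    exact fun V w => truth_iff.2 (by rw [Truth, Truth, setOf_truth_eq_of_valid_iff ih V])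
  | reP _ ih =>
    exact fun V w => truth_iff.2 (by rw [Truth, Truth, setOf_truth_eq_of_valid_iff ih V])
  | ds =>
    intro V w hOP
    obtain ⟨hO, hP⟩ := truth_and.1 hOP
    exact hPs w _ hP (by rwa [setOf_truth_neg, compl_compl])
  | dw =>
    intro V w hOO
    obtain ⟨hO, hOneg⟩ := truth_and.1 hOO
    exact hPw w _ hO hOneg
  | afcpo _ _ h | afcpp _ _ h | afcp2p _ _ h | mO _ _ h | mP _ _ h
  | ifcpo h | ifcpp h | ifcp2p h => cases h

end Soundness

def CanonicalWorld (S : Flags) : Type := {Γ : Set Form // MaximalConsistent S Γ}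

section Canonical

variable {S : Flags} {p q : Form}

def truthSet (S : Flags) (p : Form) : Set (CanonicalWorld S) := {Γ | p ∈ Γ.1}

theorem truthSet_neg : truthSet S p.neg = (truthSet S p)ᶜ :=
  Set.ext fun Γ => Γ.2.neg_mem

theorem prv_iff_of_truthSet_eq (h : truthSet S p = truthSet S q) : Prv S (p.iff q) :=
  prv_iff_forall_maximalConsistent.2 fun Γ hΓ => hΓ.iff_mem.2 (Set.ext_iff.1 h ⟨Γ, hΓ⟩)

theorem truthSet_mem_image_iff {P : Form → Prop}
    (hP : ∀ {p q}, Prv S (p.iff q) → P q → P p) :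
    truthSet S p ∈ truthSet S '' {q | P q} ↔ P p :=
  ⟨fun ⟨_, hq, hqp⟩ => hP (prv_iff_of_truthSet_eq hqp.symm) hq, fun hp => ⟨p, hp, rfl⟩⟩

abbrev canonicalFrame (S : Flags) (ne : Nonempty (CanonicalWorld S)) : Frame where
  W := CanonicalWorld S
  ne := ne
  NO Γ := truthSet S '' {p | .obl p ∈ Γ.1}
  NP Γ := truthSet S '' {p | .ps p ∈ Γ.1}

def canonicalVal (S : Flags) (n : Nat) : Set (CanonicalWorld S) := truthSet S (.atom n)

variable {ne : Nonempty (CanonicalWorld S)} {Γ : CanonicalWorld S}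

theorem truthSet_mem_canonicalFrame_NO :
    truthSet S p ∈ (canonicalFrame S ne).NO Γ ↔ .obl p ∈ Γ.1 :=
  truthSet_mem_image_iff fun h => (Γ.2.mem_congr (.reO h)).2

theorem truthSet_mem_canonicalFrame_NP :
    truthSet S p ∈ (canonicalFrame S ne).NP Γ ↔ .ps p ∈ Γ.1 :=
  truthSet_mem_image_iff fun h => (Γ.2.mem_congr (.reP h)).2

theorem truth_canonicalFrame (p : Form) (Γ : CanonicalWorld S) :
    Truth (canonicalFrame S ne) (canonicalVal S) Γ p ↔ p ∈ Γ.1 := by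
  induction p generalizing Γ with
  | atom => exact Iff.rfl
  | fls => exact iff_of_false id Γ.2.fls_notMem
  | imp p q ihp ihq =>
    simp only [Truth, ihp, ihq]
    exact Γ.2.imp_mem.symm
  | obl p ih =>
    have hset : {v | Truth (canonicalFrame S ne) (canonicalVal S) v p} = truthSet S p :=
      Set.ext ih
    simp only [Truth, hset]
    exact truthSet_mem_canonicalFrame_NO
  | ps p ih =>
    have hset : {v | Truth (canonicalFrame S ne) (canonicalVal S) v p} = truthSet S p :=
      Set.ext ih
    simp only [Truth, hset]
    exact truthSet_mem_canonicalFrame_NP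

theorem canonicalFrame_psCoherent (hds : S.ds = true) : PsCoherent (canonicalFrame S ne) := by
  rintro Γ _ ⟨p, hP, rfl⟩ hO
  rw [← truthSet_neg, truthSet_mem_canonicalFrame_NO] at hO
  have hPnn : Form.ps p.neg.neg ∈ Γ.1 := by
    rw [← truthSet_mem_canonicalFrame_NP (ne := ne), truthSet_neg, truthSet_neg, compl_compl]
    exact ⟨p, hP, rfl⟩
  exact Γ.2.not_and_of_prv_neg_and (Prv.ds p.neg hds) ⟨hO, hPnn⟩

theorem canonicalFrame_pwCoherent (hdw : S.dw = true) : PwCoherent (canonicalFrame S ne) := by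
  rintro Γ _ ⟨p, hO, rfl⟩ hOneg
  rw [← truthSet_neg, truthSet_mem_canonicalFrame_NO] at hOneg
  exact Γ.2.not_and_of_prv_neg_and (Prv.dw p hdw) ⟨hO, hOneg⟩

end Canonical

/-- Soundness and completeness of the system `Min = E ⊕ D_s ⊕ D_w` with
respect to the class of deontic neighbourhood frames that are both
`Ps`-coherent and `Pw`-coherent. -/
theorem Min_sound_complete :
    ∀ p : Form,
      Prv SysMin p ↔ ∀ F : Frame, PsCoherent F → PwCoherent F → Valid F p := by
  intro p
  refine ⟨fun h F hPs hPw => valid_of_prv_sysMin hPs hPw h, fun h => ?_⟩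
  by_contra hp
  obtain ⟨Γ, hΓ, hpΓ⟩ := exists_maximalConsistent_notMem hp
  let F := canonicalFrame SysMin ⟨⟨Γ, hΓ⟩⟩
  have hvalid : Valid F p := h F (canonicalFrame_psCoherent rfl) (canonicalFrame_pwCoherent rfl)
  exact hpΓ ((truth_canonicalFrame p ⟨Γ, hΓ⟩).1 (hvalid (canonicalVal SysMin) ⟨Γ, hΓ⟩))

end Deontic
end

section
/- Permission Explosion: in any modal system containing all classical propositional tautologies, closed under modus ponens and under the monotonicity rule RM-P (from ⊢ p → q infer ⊢ P p → P q), and containing every instance of the free choice permission schema FCP: P(p ∨ q) → (P p ∧ P q), the formula P p → P q is a theorem for all formulas p and q. -/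
namespace Deontic

/-- Boolean evaluation of a formula under an assignment of truth values to
formulas, treating atoms and modal formulas as propositional atoms. -/
def BEval (v : Form → Prop) : Form → Prop
  | .fls => False
  | .imp p q => BEval v p → BEval v q
  | .atom n => v (.atom n)
  | .obl p => v (.obl p)
  | .ps p => v (.ps p)

/-- A formula is a classical propositional tautology iff it evaluates to true
under every Boolean assignment (modal subformulas treated as atoms). -/
def Taut (p : Form) : Prop := ∀ v : Form → Prop, BEval v p

/-- Permission Explosion: any modal system (here an arbitrary set of theorems
`T`, with `Ps` playing the role of the permission operator `P`) that contains
all classical propositional tautologies, is closed under modus ponens and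
under the monotonicity rule RM-P, and contains every instance of the free
choice permission schema `FCP : P(p ∨ q) → (P p ∧ P q)`, has `P p → P q` as a
theorem for all formulas `p` and `q`. -/
theorem permission_explosion
    (T : Form → Prop)
    (htaut : ∀ p : Form, Taut p → T p)
    (hmp : ∀ p q : Form, T (p.imp q) → T p → T q)
    (hrmp : ∀ p q : Form, T (p.imp q) → T ((Form.ps p).imp (Form.ps q)))
    (hfcp : ∀ p q : Form,
      T ((Form.ps (p.or q)).imp ((Form.ps p).and (Form.ps q)))) :
    ∀ p q : Form, T ((Form.ps p).imp (Form.ps q)) := by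
  intro p q
  -- `p → (p ∨ q)` is a tautology, so RM-P gives `P p → P (p ∨ q)`.
  have h1 : T ((Form.ps p).imp (Form.ps (p.or q))) := by
    apply hrmp
    apply htaut
    intro v
    simp only [Form.or, Form.neg, BEval]
    tauto
  have h2 := hfcp p q
  -- chain with a propositional tautology
  have h3 : T ((((Form.ps p).imp (Form.ps (p.or q)))).imp
      (((Form.ps (p.or q)).imp ((Form.ps p).and (Form.ps q))).imp
        ((Form.ps p).imp (Form.ps q)))) := by
    apply htaut
    intro v
    simp only [Form.and, Form.neg, BEval]
    tauto
  exact hmp _ _ (hmp _ _ h3 h1) h2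

end Deontic
end
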